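/- arXiv:math/0606517 — 3 statements merged into one kernel-verified Lean document; each statement's English description precedes it below -/
import Mathlib

section
/- Let K be a field of characteristic zero and f, g ∈ K[x₁,…,xₙ]. Then f and g are algebraically dependent over K if and only if all 2×2 Jacobian determinants J_{x_i,x_j}(f,g) = ∂f/∂x_i · ∂g/∂x_j − ∂f/∂x_j · ∂g/∂x_i vanish for all 1 ≤ i < j ≤ n. -/
/-!
If `P(f, g) = 0` is a relation of minimal degree, the chain rule gives
`∂P/∂s(f, g) · ∇f + ∂P/∂t(f, g) · ∇g = 0` with a nonzero coefficient (in characteristic zero a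
nonconstant `P` has a nonzero partial derivative, which is not a relation by minimality), so the
gradients are proportional and all `2 × 2` minors vanish.

Conversely, induct on the number of variables, working over a domain of characteristic zero.
Moving the last variable `x` into the coefficient ring `R[x]`, the vanishing of the minors in the
remaining variables gives, by induction, a relation over `R[x]`, i.e. a relation `P(f, g, x) = 0`
over `R`. Choose it minimal. If `P` does not involve `x`, it relates `f` and `g`. Otherwise
`a = ∂P/∂x(f, g, x) ≠ 0`, and the chain rule together with the minors `J_{x_i, x}` forces
`a · ∂f/∂x_i = a · ∂g/∂x_i = 0` for every other variable `x_i`: then `f` and `g` are polynomials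
in `x` alone, hence dependent since the transcendence degree of `R[x]` is one.
-/

open MvPolynomial

variable {R σ A : Type*} [CommRing R] [CommRing A] [Algebra R A]

namespace MvPolynomial

theorem totalDegree_pderiv_lt {i : σ} {p : MvPolynomial σ R} (h : pderiv i p ≠ 0) :
    (pderiv i p).totalDegree < p.totalDegree := by
  have key : ∀ m ∈ (pderiv i p).support, (m.sum fun _ e => e) < p.totalDegree := by
    intro m hm
    rw [mem_support_iff, coeff_pderiv] at hm
    have := le_totalDegree (mem_support_iff.2 (left_ne_zero_of_mul hm))
    rw [Finsupp.sum_add_index' (fun _ => rfl) fun _ _ _ => rfl] at this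
    simpa using this
  obtain ⟨m, hm⟩ := support_nonempty.2 h
  exact (Finset.sup_lt_iff ((Nat.zero_le _).trans_lt (key m hm))).2 key

theorem pderiv_eq_zero_iff_notMem_vars [IsDomain R] [CharZero R] {i : σ}
    {p : MvPolynomial σ R} : pderiv i p = 0 ↔ i ∉ p.vars := by
  refine ⟨fun h hi => ?_, pderiv_eq_zero_of_notMem_vars⟩
  obtain ⟨m, hm, hmi⟩ := (mem_vars_iff_mem_support i).1 hi
  have hle : Finsupp.single i 1 ≤ m :=
    Finsupp.single_le_iff.2 (Nat.one_le_iff_ne_zero.2 (Finsupp.mem_support_iff.1 hmi))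
  have := coeff_pderiv (i := i) p (m - Finsupp.single i 1)
  rw [h, tsub_add_cancel_of_le hle, coeff_zero, eq_comm, mul_eq_zero] at this
  exact this.elim (mem_support_iff.1 hm) (Nat.cast_add_one_ne_zero _)

theorem vars_subset_singleton_of_forall_pderiv_eq_zero [IsDomain R] [CharZero R] {k : σ}
    {p : MvPolynomial σ R} (h : ∀ i ≠ k, pderiv i p = 0) : p.vars ⊆ {k} := fun i hi =>
  Finset.mem_singleton.2 (by_contra fun hik => pderiv_eq_zero_iff_notMem_vars.1 (h i hik) hi)

end MvPolynomial

theorem Derivation.map_mvPolynomial_aeval {M : Type*} [AddCommGroup M] [Module A M] [Module R M]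
    [IsScalarTower R A M] [Fintype σ] (D : Derivation R A M) (v : σ → A) (P : MvPolynomial σ R) :
    D (aeval v P) = ∑ k, aeval v (pderiv k P) • D (v k) := by
  classical
  induction P using MvPolynomial.induction_on with
  | C a => simp
  | add p q hp hq => simp [hp, hq, add_smul, Finset.sum_add_distrib]
  | mul_X p k hp =>
    simp [hp, add_smul, Finset.sum_add_distrib, Finset.smul_sum, pderiv_X, Pi.single_apply,
      mul_smul, smul_comm (v k), apply_ite (aeval v), ite_smul]

theorem exists_relation_forall_aeval_pderiv_ne_zero {v : σ → A}
    (hv : ¬AlgebraicIndependent R v) :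
    ∃ P : MvPolynomial σ R, P ≠ 0 ∧ aeval v P = 0 ∧
      ∀ k, pderiv k P ≠ 0 → aeval v (pderiv k P) ≠ 0 := by
  obtain ⟨P, ⟨hP0, hP⟩, hmin⟩ := (measure totalDegree).wf.has_min {P | P ≠ 0 ∧ aeval v P = 0}
    (by simpa [algebraicIndependent_iff, and_comm, Set.Nonempty] using hv)
  exact ⟨P, hP0, hP, fun k hk hkP => hmin _ ⟨hk, hkP⟩ (totalDegree_pderiv_lt hk)⟩

theorem exists_ne_zero_forall_derivation_sum_smul_eq_zero [IsDomain R] [CharZero R] [Fintype σ]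
    {M : Type*} [AddCommGroup M] [Module A M] [Module R M] [IsScalarTower R A M]
    (hA : Function.Injective (algebraMap R A)) {v : σ → A} (hv : ¬AlgebraicIndependent R v) :
    ∃ c : σ → A, c ≠ 0 ∧ ∀ D : Derivation R A M, ∑ k, c k • D (v k) = 0 := by
  obtain ⟨P, hP0, hP, hmin⟩ := exists_relation_forall_aeval_pderiv_ne_zero hv
  refine ⟨fun k => aeval v (pderiv k P), fun hc => hP0 ?_, fun D => ?_⟩
  · have hvars : P.vars = ∅ := Finset.eq_empty_of_forall_notMem fun k =>
      pderiv_eq_zero_iff_notMem_vars.1 (not_imp_not.1 (hmin k) (congrFun hc k))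
    rw [vars_eq_empty_iff_eq_C.1 hvars, aeval_C, map_eq_zero_iff _ hA] at hP
    rw [vars_eq_empty_iff_eq_C.1 hvars, hP, map_zero]
  · rw [← D.map_mvPolynomial_aeval, hP, map_zero]

theorem Derivation.mul_sub_mul_eq_zero_of_not_algebraicIndependent [IsDomain R] [CharZero R]
    [IsDomain A] (hA : Function.Injective (algebraMap R A)) {f g : A}
    (h : ¬AlgebraicIndependent R ![f, g]) (D D' : Derivation R A A) :
    D f * D' g - D' f * D g = 0 := by
  obtain ⟨c, hc0, hc⟩ := exists_ne_zero_forall_derivation_sum_smul_eq_zero (M := A) hA h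
  have hD := hc D
  have hD' := hc D'
  simp only [Fin.sum_univ_two, Matrix.cons_val_zero, Matrix.cons_val_one, smul_eq_mul] at hD hD'
  have hc01 : c 0 ≠ 0 ∨ c 1 ≠ 0 := by
    by_contra! h0
    exact hc0 (funext (Fin.forall_fin_two.2 h0))
  rcases hc01 with hk | hk
  · refine (mul_eq_zero.1 ?_).resolve_left hk
    linear_combination D' g * hD - D g * hD'
  · refine (mul_eq_zero.1 ?_).resolve_left hk
    linear_combination D f * hD' - D' f * hD

theorem AlgebraicIndependent.card_le_card_of_vars_subset [IsDomain R] {ι : Type*} [Fintype ι]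
    {x : ι → MvPolynomial σ R} (hx : AlgebraicIndependent R x) {s : Finset σ}
    (hs : ∀ i, (x i).vars ⊆ s) : Fintype.card ι ≤ s.card := by
  have hy : AlgebraicIndependent R fun i =>
      (⟨x i, mem_supported.2 (by exact_mod_cast hs i)⟩ : supported R (s : Set σ)) :=
    hx.of_comp (supported R (s : Set σ)).val
  have := (hy.map' (f := (supportedEquivMvPolynomial (s : Set σ)).toAlgHom)
    (supportedEquivMvPolynomial (R := R) (s : Set σ)).injective).lift_cardinalMk_le_trdeg
  rw [MvPolynomial.trdeg_of_isDomain] at this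
  simpa using this

namespace MvPolynomial

theorem not_algebraicIndependent_of_not_algebraicIndependent_X [IsDomain R] [CharZero R] (k : σ)
    {f g : MvPolynomial σ R} (hJ : ∀ i, pderiv i f * pderiv k g - pderiv k f * pderiv i g = 0)
    (h : ¬AlgebraicIndependent R ![f, g, X k]) : ¬AlgebraicIndependent R ![f, g] := by
  intro hfg
  obtain ⟨P, hP0, hP, hmin⟩ := exists_relation_forall_aeval_pderiv_ne_zero h
  by_cases hP2 : pderiv 2 P = 0
  · obtain ⟨Q, rfl⟩ := exists_rename_eq_of_vars_subset_range P Fin.castSucc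
      (Fin.castSucc_injective _) fun j hj => by
        refine Fin.exists_castSucc_eq.2 fun hj2 => ?_
        exact pderiv_eq_zero_iff_notMem_vars.1 hP2 (hj2 ▸ hj :)
    have hv : ![f, g, X k] ∘ Fin.castSucc = ![f, g] := by
      ext i
      fin_cases i <;> rfl
    rw [aeval_rename, hv] at hP
    exact hP0 (by rw [hfg.eq_zero_of_aeval_eq_zero Q hP, map_zero])
  · set a := aeval ![f, g, X k] (pderiv 2 P)
    set b := aeval ![f, g, X k] (pderiv 0 P)
    set c := aeval ![f, g, X k] (pderiv 1 P)
    have hchain : ∀ i, b * pderiv i f + c * pderiv i g + a * pderiv i (X k) = 0 := fun i => by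
      have := (pderiv i).map_mvPolynomial_aeval ![f, g, X k] P
      rw [hP, map_zero, Fin.sum_univ_three] at this
      exact this.symm
    have ha : a ≠ 0 := hmin 2 hP2
    have hk := hchain k
    rw [pderiv_X_self, mul_one] at hk
    have hzero : ∀ i ≠ k, pderiv i f = 0 ∧ pderiv i g = 0 := fun i hik => by
      have hi := hchain i
      rw [pderiv_X_of_ne hik.symm, mul_zero, add_zero] at hi
      constructor
      · refine (mul_eq_zero.1 ?_).resolve_left ha
        linear_combination pderiv i f * hk - c * hJ i - pderiv k f * hi
      · refine (mul_eq_zero.1 ?_).resolve_left ha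
        linear_combination pderiv i g * hk + b * hJ i - pderiv k g * hi
    have := hfg.card_le_card_of_vars_subset (s := {k}) <| Fin.forall_fin_two.2
      ⟨vars_subset_singleton_of_forall_pderiv_eq_zero fun i hi => (hzero i hi).1,
        vars_subset_singleton_of_forall_pderiv_eq_zero fun i hi => (hzero i hi).2⟩
    simp at this

variable (R) (n : ℕ)

noncomputable def lastVarToCoeffEquiv :
    MvPolynomial (Fin (n + 1)) R ≃ₐ[R] MvPolynomial (Fin n) (MvPolynomial (Fin 1) R) :=
  (renameEquiv R finSumFinEquiv.symm).trans (sumAlgEquiv R (Fin n) (Fin 1))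

variable {R n}

@[simp]
theorem lastVarToCoeffEquiv_X_castSucc (i : Fin n) :
    lastVarToCoeffEquiv R n (X i.castSucc) = X i := by
  simp [lastVarToCoeffEquiv, sumAlgEquiv_X_inl]

@[simp]
theorem lastVarToCoeffEquiv_X_last : lastVarToCoeffEquiv R n (X (Fin.last n)) = C (X 0) := by
  simp [lastVarToCoeffEquiv, sumAlgEquiv_X_inr]

theorem pderiv_lastVarToCoeffEquiv (i : Fin n) (p : MvPolynomial (Fin (n + 1)) R) :
    pderiv i (lastVarToCoeffEquiv R n p) = lastVarToCoeffEquiv R n (pderiv i.castSucc p) := by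
  simp [lastVarToCoeffEquiv, ← pderiv_rename finSumFinEquiv.symm.injective]

theorem lastVarToCoeffEquiv_aeval_snoc {k : ℕ} (v : Fin k → MvPolynomial (Fin (n + 1)) R)
    (P : MvPolynomial (Fin (k + 1)) R) :
    lastVarToCoeffEquiv R n (aeval (Fin.snoc v (X (Fin.last n))) P) =
      aeval (lastVarToCoeffEquiv R n ∘ v) (lastVarToCoeffEquiv R k P) := by
  have : (lastVarToCoeffEquiv R n).toAlgHom.comp (aeval (Fin.snoc v (X (Fin.last n)))) =
      ((aeval (lastVarToCoeffEquiv R n ∘ v)).restrictScalars R).comp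
        (lastVarToCoeffEquiv R k).toAlgHom := by
    ext i
    induction i using Fin.lastCases <;> simp
  exact AlgHom.congr_fun this P

theorem algebraicIndependent_lastVarToCoeffEquiv_comp_iff {k : ℕ}
    (v : Fin k → MvPolynomial (Fin (n + 1)) R) :
    AlgebraicIndependent (MvPolynomial (Fin 1) R) (lastVarToCoeffEquiv R n ∘ v) ↔
      AlgebraicIndependent R (Fin.snoc v (X (Fin.last n)) : Fin (k + 1) → _) := by
  have : ⇑(aeval (lastVarToCoeffEquiv R n ∘ v)) = lastVarToCoeffEquiv R n ∘
      aeval (Fin.snoc v (X (Fin.last n))) ∘ (lastVarToCoeffEquiv R k).symm := by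
    ext1 P
    simp only [Function.comp_apply, lastVarToCoeffEquiv_aeval_snoc, AlgEquiv.apply_symm_apply]
  rw [algebraicIndependent_iff_injective_aeval, algebraicIndependent_iff_injective_aeval, this,
    EquivLike.comp_injective, EquivLike.injective_comp]

theorem not_algebraicIndependent_of_jacobians_eq_zero {R : Type*} [CommRing R] [IsDomain R]
    [CharZero R] {n : ℕ} {f g : MvPolynomial (Fin n) R}
    (hJ : ∀ i j, pderiv i f * pderiv j g - pderiv j f * pderiv i g = 0) :
    ¬AlgebraicIndependent R ![f, g] := by
  induction n generalizing R with
  | zero =>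
    intro hfg
    have := hfg.card_le_card_of_vars_subset (s := ∅) fun _ j _ => j.elim0
    simp at this
  | succ m ih =>
    set e := lastVarToCoeffEquiv R m
    have hJe : ∀ i j, pderiv i (e f) * pderiv j (e g) - pderiv j (e f) * pderiv i (e g) = 0 := by
      intro i j
      simp only [e, pderiv_lastVarToCoeffEquiv, ← map_mul, ← map_sub, hJ, map_zero]
    have hsnoc : (Fin.snoc ![f, g] (X (Fin.last m)) : Fin 3 → _) = ![f, g, X (Fin.last m)] := by
      simp
    have hcomp : e ∘ ![f, g] = ![e f, e g] := by
      ext i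
      fin_cases i <;> rfl
    refine not_algebraicIndependent_of_not_algebraicIndependent_X (Fin.last m) (fun i => hJ i _) ?_
    rw [← hsnoc, ← algebraicIndependent_lastVarToCoeffEquiv_comp_iff, hcomp]
    exact ih hJe

end MvPolynomial

/-- Jacobian criterion for algebraic dependence of two polynomials in
characteristic zero. -/
theorem algebraicallyDependent_iff_jacobians_vanish
    (K : Type) [Field K] [CharZero K] (n : ℕ) (f g : MvPolynomial (Fin n) K) :
    (∃ P : MvPolynomial (Fin 2) K, P ≠ 0 ∧ MvPolynomial.aeval ![f, g] P = 0) ↔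
      (∀ i j : Fin n, i < j →
        MvPolynomial.pderiv i f * MvPolynomial.pderiv j g -
          MvPolynomial.pderiv j f * MvPolynomial.pderiv i g = 0) := by
  have hdep : (∃ P : MvPolynomial (Fin 2) K, P ≠ 0 ∧ aeval ![f, g] P = 0) ↔
      ¬AlgebraicIndependent K ![f, g] := by
    simp [algebraicIndependent_iff, and_comm]
  rw [hdep]
  refine ⟨fun h i j _ => (pderiv i).mul_sub_mul_eq_zero_of_not_algebraicIndependent
    (algebraMap K _).injective h (pderiv j), fun hJ => ?_⟩
  refine not_algebraicIndependent_of_jacobians_eq_zero fun i j => ?_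
  rcases lt_trichotomy i j with hij | rfl | hij
  · exact hJ i j hij
  · ring
  · linear_combination -hJ j i hij
end

section
/- Let K be a field, A a K-algebra, and π : A → A a K-algebra endomorphism. If u ∈ A and S is a subalgebra with S ⊆ K[u], π(s) = s for all s ∈ S, and π(u) ∈ S, then S = K[π(u)]. -/
/-- Key retraction lemma: if `S ⊆ K[u]`, `π` fixes `S` pointwise, and `π u ∈ S`,
then `S = K[π u]`. -/
theorem subalgebra_eq_adjoin_of_retraction
    (K : Type) [Field K] (A : Type) [Semiring A] [Algebra K A]
    (π : A →ₐ[K] A) (u : A) (S : Subalgebra K A)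
    (hS : S ≤ Algebra.adjoin K {u})
    (hfix : ∀ s ∈ S, π s = s)
    (hu : π u ∈ S) :
    S = Algebra.adjoin K {π u} := by
  apply le_antisymm
  · intro s hs
    have h3 : π s ∈ (Algebra.adjoin K {u}).map π := ⟨s, hS hs, rfl⟩
    rw [AlgHom.map_adjoin, Set.image_singleton] at h3
    rwa [hfix s hs] at h3
  · exact Algebra.adjoin_le (by simpa using hu)
end

section
/- Let K be a field and f, g, h ∈ K⟨x₁,…,xₙ⟩ with f nonscalar. If fg = gf and fh = hf, then gh = hg. In other words, the centralizer of a nonscalar element of a free associative algebra is commutative. -/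
/-!
Transport everything to `K[Additive (FreeMonoid X)]`, order the words by shortlex, and look at
leading words. The leading word of an element commuting with `f` commutes with the leading word
of `f`, which is not the empty word, so it is a power `t ^ ν` of one fixed word `t`; the exponent
`ν` is additive, and `ν [x, y] ≤ ν x + ν y`.

Suppose `x, y` commute with `f` but `[x, y] ≠ 0`, and put `a = ν x`, `b = ν y`, `m = ν [x, y]`.
With `k = a / gcd a b` and `j = b / gcd a b` coprime, one of them is nonzero in `K`; say `k`.
Subtracting from `y ^ k` the multiple of `x ^ j` with the same leading term leaves `r` with
`ν r < k b`, while `[x, r] = [x, y ^ k] = ∑ y ^ i [x, y] y ^ (k - 1 - i)` has leading coefficient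
`k · lc(y) ^ (k - 1) · lc [x, y] ≠ 0`, hence `ν [x, r] = (k - 1) b + m`. So the pair `(x, r)` has
a strictly smaller gap `ν x + ν r - ν [x, r] < a + b - m`: an impossible infinite descent in `ℕ`.
-/

open Finset

theorem bot_eq_zero_of_addLeftStrictMono {A : Type*} [AddZeroClass A] [PartialOrder A]
    [OrderBot A] [AddLeftStrictMono A] : (⊥ : A) = 0 := by
  by_contra h
  have := add_lt_add_right (bot_lt_iff_ne_bot.2 (Ne.symm h)) (⊥ : A)
  rw [add_zero] at this
  exact not_lt_bot this

theorem sum_range_pow_mul_commutator_mul_pow {R : Type*} [Ring R] (x y : R) (k : ℕ) :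
    ∑ i ∈ range k, y ^ i * (x * y - y * x) * y ^ (k - 1 - i) = x * y ^ k - y ^ k * x := by
  induction k with
  | zero => simp
  | succ k ih =>
    rw [sum_range_succ, Nat.add_sub_cancel, Nat.sub_self, pow_zero, mul_one]
    have hshift : ∀ i ∈ range k, y ^ i * (x * y - y * x) * y ^ (k - i) =
        y ^ i * (x * y - y * x) * y ^ (k - 1 - i) * y := by
      intro i hi
      rw [mul_assoc _ (y ^ (k - 1 - i)), ← pow_succ, Nat.sub_right_comm,
        Nat.sub_add_cancel (Nat.sub_pos_of_lt (mem_range.1 hi))]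
    rw [sum_congr rfl hshift, ← sum_mul, ih, pow_succ]
    noncomm_ring

theorem List.Lex.append_of_length_eq {α : Type*} {r : α → α → Prop} {s₁ s₂ : List α}
    (hl : s₁.length = s₂.length) (h : List.Lex r s₁ s₂) (t₁ t₂ : List α) :
    List.Lex r (s₁ ++ t₁) (s₂ ++ t₂) := by
  induction h with
  | nil => simp at hl
  | cons _ ih => exact .cons (ih (by simpa using hl))
  | rel h => exact .rel h

namespace AddMonoidAlgebra

section Semiring

variable {R A : Type*} [Semiring R] [LinearOrder A] [OrderBot A]

theorem leadingCoeff_id (p : R[A]) : p.leadingCoeff id = p.coeff (p.supDegree id) :=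
  congrArg p.coeff (Function.leftInverse_invFun Function.injective_id _)

theorem supDegree_id_sum_eq {ι : Type*} {s : Finset ι} {f : ι → R[A]} {d : A} {c : R}
    (hd : ∀ i ∈ s, (f i).supDegree id = d) (hc : ∀ i ∈ s, (f i).leadingCoeff id = c)
    (hsc : (#s : R) * c ≠ 0) :
    ∑ i ∈ s, f i ≠ 0 ∧ (∑ i ∈ s, f i).supDegree id = d := by
  have hcoeff : (∑ i ∈ s, f i).coeff d = #s * c := by
    rw [coeff_sum, Finsupp.finsetSum_apply,
      sum_congr rfl fun i hi => by rw [← hd i hi, ← leadingCoeff_id, hc i hi], sum_const,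
      nsmul_eq_mul]
  have hmem : d ∈ (∑ i ∈ s, f i).coeff.support := Finsupp.mem_support_iff.2 (hcoeff ▸ hsc)
  refine ⟨fun h => by simp [h] at hmem, le_antisymm ?_ (Finset.le_sup (f := id) hmem)⟩
  exact supDegree_sum_le.trans (Finset.sup_le fun i hi => (hd i hi).le)

theorem eq_single_zero_of_supDegree_id_eq_zero [AddZeroClass A] [AddLeftStrictMono A]
    {p : R[A]} (hp : p.supDegree id = 0) : p = single 0 (p.coeff 0) := by
  ext a
  rcases eq_or_ne a 0 with rfl | ha
  · simp
  · rw [coeff_single, Finsupp.single_eq_of_ne ha]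
    refine coeff_eq_zero_of_not_le_supDegree (D := id) fun hle => ha ?_
    rw [hp] at hle
    exact le_antisymm hle (bot_eq_zero_of_addLeftStrictMono (A := A) ▸ bot_le)

variable [AddMonoid A] [AddLeftStrictMono A] [AddRightStrictMono A] [NoZeroDivisors R]

theorem leadingCoeff_id_mul (p q : R[A]) :
    (p * q).leadingCoeff id = p.leadingCoeff id * q.leadingCoeff id :=
  leadingCoeff_mul Function.injective_id fun _ _ => rfl

instance : NoZeroDivisors R[A] where
  eq_zero_or_eq_zero_of_mul_eq_zero {p q} h := by
    simpa [h, ← leadingCoeff_eq_zero Function.injective_id] using (leadingCoeff_id_mul p q).symm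

theorem supDegree_id_mul {p q : R[A]} (hp : p ≠ 0) (hq : q ≠ 0) :
    (p * q).supDegree id = p.supDegree id + q.supDegree id :=
  supDegree_mul Function.injective_id (fun _ _ => rfl)
    (mul_ne_zero ((leadingCoeff_ne_zero Function.injective_id).2 hp)
      ((leadingCoeff_ne_zero Function.injective_id).2 hq)) hp hq

theorem supDegree_id_pow {p : R[A]} (hp : p ≠ 0) (k : ℕ) :
    (p ^ k).supDegree id = k • p.supDegree id := by
  induction k with
  | zero =>
    rw [pow_zero, zero_nsmul, one_def, supDegree_single, bot_eq_zero_of_addLeftStrictMono, id,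
      ite_self]
  | succ k ih => rw [pow_succ, supDegree_id_mul (pow_ne_zero k hp) hp, ih, succ_nsmul]

theorem leadingCoeff_id_pow (p : R[A]) (k : ℕ) :
    (p ^ k).leadingCoeff id = p.leadingCoeff id ^ k := by
  induction k with
  | zero => rw [pow_zero, pow_zero, one_def, leadingCoeff_single Function.injective_id]
  | succ k ih => rw [pow_succ, pow_succ, leadingCoeff_id_mul, ih]

end Semiring

variable {A : Type*} [LinearOrder A] [OrderBot A]

theorem commute_of_supDegree_id_eq_zero {R : Type*} [CommSemiring R] [AddZeroClass A]
    [AddLeftStrictMono A] {p : R[A]} (hp : p.supDegree id = 0) (q : R[A]) : Commute p q :=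
  eq_single_zero_of_supDegree_id_eq_zero hp ▸ single_zero_comm _ q

theorem exists_supDegree_id_sub_smul_lt {K : Type*} [DivisionRing K] [AddZeroClass A]
    {p q : K[A]} (hq : q ≠ 0) (hpq : p.supDegree id = q.supDegree id) :
    ∃ c : K, (p - c • q).supDegree id < p.supDegree id ∨ p = c • q := by
  rcases eq_or_ne p 0 with rfl | hp
  · exact ⟨0, .inr (zero_smul K q).symm⟩
  have hq' : q.leadingCoeff id ≠ 0 := (leadingCoeff_ne_zero Function.injective_id).2 hq
  have hc : p.leadingCoeff id / q.leadingCoeff id ≠ 0 :=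
    div_ne_zero ((leadingCoeff_ne_zero Function.injective_id).2 hp) hq'
  refine ⟨p.leadingCoeff id / q.leadingCoeff id, ?_⟩
  have hsupp : ((p.leadingCoeff id / q.leadingCoeff id) • q).supDegree id = q.supDegree id := by
    simp only [supDegree, coeff_smul, Finsupp.support_smul_eq hc]
  refine supDegree_sub_lt_of_leadingCoeff_eq Function.injective_id (hpq.trans hsupp.symm) ?_
  rw [leadingCoeff_id (_ • q), hsupp, coeff_smul, Finsupp.smul_apply, smul_eq_mul,
    ← leadingCoeff_id, div_mul_cancel₀ _ hq']

variable [AddMonoid A] [AddLeftStrictMono A] [AddRightStrictMono A]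

theorem supDegree_id_mul_pow_sub_pow_mul {R : Type*} [CommRing R] [NoZeroDivisors R] {x y : R[A]}
    (hy : y ≠ 0) (hz : x * y - y * x ≠ 0)
    (hcomm : AddCommute (y.supDegree id) ((x * y - y * x).supDegree id)) {k : ℕ}
    (hk : (k : R) ≠ 0) :
    x * y ^ k - y ^ k * x ≠ 0 ∧ (x * y ^ k - y ^ k * x).supDegree id =
      (k - 1) • y.supDegree id + (x * y - y * x).supDegree id := by
  rw [← sum_range_pow_mul_commutator_mul_pow]
  refine supDegree_id_sum_eq (c := y.leadingCoeff id ^ (k - 1) * (x * y - y * x).leadingCoeff id)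
    (fun i hi => ?_) (fun i hi => ?_) ?_
  · have hi' : i + (k - 1 - i) = k - 1 := by have := mem_range.1 hi; omega
    rw [supDegree_id_mul (mul_ne_zero (pow_ne_zero i hy) hz) (pow_ne_zero _ hy),
      supDegree_id_mul (pow_ne_zero i hy) hz, supDegree_id_pow hy, supDegree_id_pow hy,
      add_assoc, (hcomm.symm.nsmul_right _).eq, ← add_assoc, ← add_nsmul, hi']
  · have hi' : i + (k - 1 - i) = k - 1 := by have := mem_range.1 hi; omega
    rw [leadingCoeff_id_mul, leadingCoeff_id_mul, leadingCoeff_id_pow, leadingCoeff_id_pow,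
      mul_right_comm, ← pow_add, hi']
  · rw [card_range]
    exact mul_ne_zero hk (mul_ne_zero
      (pow_ne_zero _ ((leadingCoeff_ne_zero Function.injective_id).2 hy))
      ((leadingCoeff_ne_zero Function.injective_id).2 hz))

variable {K : Type*} [Field K]

section Exponent

variable {S : Subalgebra K K[A]} {t : A} {ν : K[A] → ℕ} {x y : K[A]}

theorem exponent_commutator_le (ht : 0 < t)
    (hν : ∀ p ∈ S, p ≠ 0 → p.supDegree id = ν p • t) (hx : x ∈ S) (hy : y ∈ S)
    (hz : x * y - y * x ≠ 0) : ν (x * y - y * x) ≤ ν x + ν y := by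
  have hx0 : x ≠ 0 := by rintro rfl; simp at hz
  have hy0 : y ≠ 0 := by rintro rfl; simp at hz
  have hxy : (x * y).supDegree id = (ν x + ν y) • t := by
    rw [supDegree_id_mul hx0 hy0, hν x hx hx0, hν y hy hy0, add_nsmul]
  have hyx : (y * x).supDegree id = (ν x + ν y) • t := by
    rw [supDegree_id_mul hy0 hx0, hν x hx hx0, hν y hy hy0, add_comm (ν x), add_nsmul]
  rw [← (nsmul_left_strictMono ht).le_iff_le,
    ← hν _ (sub_mem (mul_mem hx hy) (mul_mem hy hx)) hz]
  exact supDegree_sub_le.trans (by rw [hxy, hyx, sup_idem])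

theorem exponent_mul_pow_sub_pow_mul (ht : 0 < t)
    (hν : ∀ p ∈ S, p ≠ 0 → p.supDegree id = ν p • t) (hx : x ∈ S) (hy : y ∈ S)
    (hz : x * y - y * x ≠ 0) {k : ℕ} (hk : (k : K) ≠ 0) :
    x * y ^ k - y ^ k * x ≠ 0 ∧
      ν (x * y ^ k - y ^ k * x) = (k - 1) * ν y + ν (x * y - y * x) := by
  have hy0 : y ≠ 0 := by rintro rfl; simp at hz
  have hzS := sub_mem (mul_mem hx hy) (mul_mem hy hx)
  have hcomm : AddCommute (y.supDegree id) ((x * y - y * x).supDegree id) := by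
    rw [hν y hy hy0, hν _ hzS hz]
    exact ((AddCommute.refl t).nsmul_left _).nsmul_right _
  obtain ⟨hne, hdeg⟩ := supDegree_id_mul_pow_sub_pow_mul hy0 hz hcomm hk
  refine ⟨hne, (nsmul_left_strictMono ht).injective (?_ : ν _ • t = _ • t)⟩
  rw [← hν _ (sub_mem (mul_mem hx (pow_mem hy k)) (mul_mem (pow_mem hy k) hx)) hne, hdeg,
    hν y hy hy0, hν _ hzS hz, smul_smul, add_nsmul]

theorem exists_commutator_gap_lt_of_cast_ne_zero (ht : 0 < t)
    (hν : ∀ p ∈ S, p ≠ 0 → p.supDegree id = ν p • t) (hx : x ∈ S) (hy : y ∈ S)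
    (hz : x * y - y * x ≠ 0) (hk : ((ν x / (ν x).gcd (ν y) : ℕ) : K) ≠ 0) :
    ∃ r ∈ S, x * r - r * x ≠ 0 ∧ ν r + ν (x * y - y * x) < ν y + ν (x * r - r * x) := by
  have hx0 : x ≠ 0 := by rintro rfl; simp at hz
  have hy0 : y ≠ 0 := by rintro rfl; simp at hz
  set k := ν x / (ν x).gcd (ν y)
  set j := ν y / (ν x).gcd (ν y)
  have hk1 : 1 ≤ k := Nat.one_le_iff_ne_zero.2 fun h => hk (by rw [h, Nat.cast_zero])
  have hjk : j * ν x = k * ν y := by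
    rw [mul_comm, ← Nat.mul_div_assoc _ (Nat.gcd_dvd_right _ _), mul_comm k,
      ← Nat.mul_div_assoc _ (Nat.gcd_dvd_left _ _), mul_comm]
  have hdeg : (y ^ k).supDegree id = (x ^ j).supDegree id := by
    rw [supDegree_id_pow hy0, supDegree_id_pow hx0, hν x hx hx0, hν y hy hy0, smul_smul,
      smul_smul, hjk]
  obtain ⟨c, hc⟩ := exists_supDegree_id_sub_smul_lt (pow_ne_zero j hx0) hdeg
  set r := y ^ k - c • x ^ j
  have hr : r ∈ S := sub_mem (pow_mem hy k) (Subalgebra.smul_mem _ (pow_mem hx j) c)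
  have hxr : x * r - r * x = x * y ^ k - y ^ k * x := by
    simp only [r, mul_sub, sub_mul, mul_smul_comm, smul_mul_assoc, (Commute.self_pow x j).eq]
    abel
  obtain ⟨hne, hνxr⟩ := exponent_mul_pow_sub_pow_mul ht hν hx hy hz hk
  rw [← hxr] at hne hνxr
  have hr0 : r ≠ 0 := by rintro h; simp [h] at hne
  have hνr : ν r < k * ν y := by
    have := hc.resolve_right (sub_ne_zero.1 hr0)
    rwa [hν r hr hr0, supDegree_id_pow hy0, hν y hy hy0, smul_smul,
      (nsmul_left_strictMono ht).lt_iff_lt] at this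
  refine ⟨r, hr, hne, ?_⟩
  have : k * ν y = (k - 1) * ν y + ν y := by
    rw [← Nat.succ_mul, Nat.succ_eq_add_one, Nat.sub_add_cancel hk1]
  omega

theorem exists_commutator_gap_lt (ht : 0 < t)
    (hν : ∀ p ∈ S, p ≠ 0 → p.supDegree id = ν p • t) (hx : x ∈ S) (hy : y ∈ S)
    (hz : x * y - y * x ≠ 0) :
    ∃ x' ∈ S, ∃ y' ∈ S, x' * y' - y' * x' ≠ 0 ∧
      ν x' + ν y' + ν (x * y - y * x) < ν x + ν y + ν (x' * y' - y' * x') := by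
  have hx0 : x ≠ 0 := by rintro rfl; simp at hz
  have hνx : ν x ≠ 0 := fun h => hz <| by
    rw [(commute_of_supDegree_id_eq_zero (by rw [hν x hx hx0, h, zero_nsmul]) y).eq, sub_self]
  have hcop := Nat.coprime_div_gcd_div_gcd (Nat.gcd_pos_of_pos_left (ν y) (Nat.pos_of_ne_zero hνx))
  rcases (hcop.cast (R := K)).ne_zero_or_ne_zero with hk | hk
  · obtain ⟨r, hr, hr0, hlt⟩ := exists_commutator_gap_lt_of_cast_ne_zero ht hν hx hy hz hk
    exact ⟨x, hx, r, hr, hr0, by omega⟩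
  · rw [Nat.gcd_comm] at hk
    have hz' : y * x - x * y ≠ 0 := by rwa [← neg_sub, neg_ne_zero]
    obtain ⟨r, hr, hr0, hlt⟩ := exists_commutator_gap_lt_of_cast_ne_zero ht hν hy hx hz' hk
    have hswap : ν (y * x - x * y) = ν (x * y - y * x) := by
      refine (nsmul_left_strictMono ht).injective (?_ : ν _ • t = _ • t)
      rw [← hν _ (sub_mem (mul_mem hy hx) (mul_mem hx hy)) hz',
        ← hν _ (sub_mem (mul_mem hx hy) (mul_mem hy hx)) hz, ← neg_sub, supDegree_neg]
    exact ⟨y, hy, r, hr, hr0, by omega⟩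

end Exponent

theorem commute_of_supDegree_mem_multiples {S : Subalgebra K K[A]} {t : A} (ht : 0 < t)
    (hS : ∀ p ∈ S, p ≠ 0 → p.supDegree id ∈ AddSubmonoid.multiples t) {x y : K[A]}
    (hx : x ∈ S) (hy : y ∈ S) : Commute x y := by
  simp only [AddSubmonoid.mem_multiples_iff] at hS
  choose! ν hν using hS
  replace hν : ∀ p ∈ S, p ≠ 0 → p.supDegree id = ν p • t := fun p hp hp0 => (hν p hp hp0).symm
  suffices ∀ G, ∀ x ∈ S, ∀ y ∈ S, x * y - y * x ≠ 0 → ν x + ν y < G + ν (x * y - y * x) → False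
    from not_not.1 fun hxy =>
      this _ x hx y hy (sub_ne_zero.2 hxy) (Nat.lt_add_right _ (Nat.lt_succ_self _))
  intro G
  induction G with
  | zero =>
    intro x hx y hy hz hlt
    have := exponent_commutator_le ht hν hx hy hz
    omega
  | succ G ih =>
    intro x hx y hy hz hlt
    obtain ⟨x', hx', y', hy', hz', hgap⟩ := exists_commutator_gap_lt ht hν hx hy hz
    exact ih x' hx' y' hy' hz' (by omega)

end AddMonoidAlgebra

namespace FreeMonoid

variable {α : Type*}

theorem length_pow (w : FreeMonoid α) (N : ℕ) : (w ^ N).length = N * w.length := by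
  induction N with
  | zero => simp
  | succ N ih => rw [pow_succ, length_mul, ih, Nat.succ_mul]

theorem toList_prefix_of_commute {v u : FreeMonoid α} (h : Commute v u)
    (hl : u.length ≤ v.length) : u.toList <+: v.toList := by
  have huv : u.toList <+: v.toList ++ u.toList := by
    rw [← toList_mul, h.eq, toList_mul]
    exact List.prefix_append _ _
  exact List.prefix_of_prefix_length_le huv (List.prefix_append _ _) hl

theorem toList_prefix_of_commute_of_commute {w t u : FreeMonoid α} (hw : w ≠ 1)
    (ht : Commute w t) (hu : Commute w u) (hl : t.length ≤ u.length) :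
    t.toList <+: u.toList := by
  have hN : u.length ≤ (w ^ u.length).length := by
    rw [length_pow]
    exact Nat.le_mul_of_pos_right _ (Nat.pos_of_ne_zero (mt length_eq_zero.1 hw))
  exact List.prefix_of_prefix_length_le (toList_prefix_of_commute (ht.pow_left _) (hl.trans hN))
    (toList_prefix_of_commute (hu.pow_left _) hN) hl

theorem exists_forall_commute_eq_pow {w : FreeMonoid α} (hw : w ≠ 1) :
    ∃ t ≠ 1, ∀ u, Commute w u → ∃ e : ℕ, t ^ e = u := by
  let s := {u : FreeMonoid α | u ≠ 1 ∧ Commute w u}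
  have hs : s.Nonempty := ⟨w, hw, Commute.refl w⟩
  obtain ⟨ht1, hwt⟩ := Function.argminOn_mem length s hs
  set t := Function.argminOn length s hs
  refine ⟨t, ht1, fun u hu => ?_⟩
  induction hl : u.length using Nat.strong_induction_on generalizing u with
  | _ l ih =>
    rcases eq_or_ne u 1 with rfl | hu1
    · exact ⟨0, pow_zero t⟩
    obtain ⟨v, hv⟩ := toList_prefix_of_commute_of_commute hw hwt hu
      (Function.argminOn_le length s ⟨hu1, hu⟩)
    replace hv : u = t * ofList v := toList.injective hv.symm
    have hwv : Commute w (ofList v) := mul_left_cancel <| by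
      rw [← mul_assoc, ← hwt.eq, mul_assoc, ← hv, hu.eq, hv, mul_assoc]
    have hlen : (ofList v).length < l := by
      rw [← hl, hv, length_mul]
      exact Nat.lt_add_of_pos_left (Nat.pos_of_ne_zero (mt length_eq_zero.1 ht1))
    obtain ⟨e, he⟩ := ih _ hlen (ofList v) hwv rfl
    exact ⟨e + 1, by rw [pow_succ', he, hv]⟩

noncomputable abbrev shortlexOrder [LinearOrder α] : LinearOrder (Additive (FreeMonoid α)) :=
  LinearOrder.lift' (fun w ↦ toLex (w.toMul.length, w.toMul.toList))
    fun _ _ h ↦ toList.injective (congrArg (·.2) (ofLex.injective.eq_iff.2 h) : _)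

end FreeMonoid

section Shortlex

open AddMonoidAlgebra

attribute [local instance] FreeMonoid.shortlexOrder

variable {α : Type*} [LinearOrder α]

theorem FreeMonoid.lt_iff_shortlex {u v : Additive (FreeMonoid α)} :
    u < v ↔ List.Shortlex (· < ·) u.toMul.toList v.toMul.toList :=
  Prod.Lex.lt_iff.trans List.shortlex_def.symm

instance : OrderBot (Additive (FreeMonoid α)) where
  bot := 0
  bot_le w := by
    rcases List.shortlex_nil_or_eq_nil (r := (· < ·)) w.toMul.toList with h | h
    · exact (FreeMonoid.lt_iff_shortlex.2 h).le
    · exact (Additive.toMul.injective (FreeMonoid.toList.injective h) : w = 0).ge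

instance : AddLeftStrictMono (Additive (FreeMonoid α)) where
  elim w u v h := by
    dsimp only at h ⊢
    rw [FreeMonoid.lt_iff_shortlex] at h ⊢
    simpa using h.append_left w.toMul.toList

instance : AddRightStrictMono (Additive (FreeMonoid α)) where
  elim w u v h := by
    dsimp only at h ⊢
    rw [FreeMonoid.lt_iff_shortlex] at h ⊢
    simp only [toMul_add, FreeMonoid.toList_mul]
    rcases List.shortlex_def.1 h with hl | ⟨hl, hlex⟩
    · exact .of_length_lt (by simpa using hl)
    · exact .of_lex (by simp [hl]) (hlex.append_of_length_eq hl _ _)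

theorem AddMonoidAlgebra.commute_of_commute_of_notMem_range {K : Type*} [Field K]
    {f x y : K[Additive (FreeMonoid α)]} (hf : f ∉ Set.range (algebraMap K _))
    (hx : Commute f x) (hy : Commute f y) : Commute x y := by
  have hf0 : f ≠ 0 := fun h => hf ⟨0, by rw [h, map_zero]⟩
  have hdeg : (f.supDegree id).toMul ≠ 1 := fun h =>
    hf ⟨f.coeff 0, (eq_single_zero_of_supDegree_id_eq_zero (toMul_eq_one.1 h)).symm⟩
  obtain ⟨t, ht1, ht⟩ := FreeMonoid.exists_forall_commute_eq_pow hdeg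
  refine commute_of_supDegree_mem_multiples (S := Subalgebra.centralizer K {f})
    (t := .ofMul t) ?_ (fun p hp hp0 => ?_) ?_ ?_
  · exact bot_le.lt_of_ne (Ne.symm (ofMul_eq_zero.not.2 ht1))
  · have hfp : f * p = p * f := by simpa [Subalgebra.mem_centralizer_iff] using hp
    have hcomm : Commute (f.supDegree id).toMul (p.supDegree id).toMul := by
      rw [Commute, SemiconjBy, ← toMul_add, ← toMul_add, ← supDegree_id_mul hf0 hp0,
        ← supDegree_id_mul hp0 hf0, hfp]
    obtain ⟨e, he⟩ := ht _ hcomm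
    exact (AddSubmonoid.mem_multiples_iff _ _).2 ⟨e, by rw [← ofMul_pow, he, ofMul_toMul]⟩
  · simpa [Subalgebra.mem_centralizer_iff] using hx.eq
  · simpa [Subalgebra.mem_centralizer_iff] using hy.eq

end Shortlex

theorem FreeAlgebra.commute_of_commute_of_notMem_range {K X : Type*} [Field K]
    {f g h : FreeAlgebra K X} (hf : f ∉ Set.range (algebraMap K (FreeAlgebra K X)))
    (hg : Commute f g) (hh : Commute f h) : Commute g h := by
  obtain ⟨_, -⟩ := exists_wellFoundedLT X
  let φ := equivMonoidAlgebraFreeMonoid.trans (MonoidAlgebra.toAdditiveAlgEquiv K K (FreeMonoid X))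
  have hφf : φ f ∉ Set.range (algebraMap K _) := by
    rintro ⟨c, hc⟩
    exact hf ⟨c, φ.injective (by rw [AlgEquiv.commutes, hc])⟩
  simpa using
    (AddMonoidAlgebra.commute_of_commute_of_notMem_range hφf (hg.map φ) (hh.map φ)).map φ.symm

/-- The centralizer of a nonscalar element of a free associative algebra is
commutative. -/
theorem freeAlgebra_centralizer_commutative
    (K : Type) [Field K] (n : ℕ) (f g h : FreeAlgebra K (Fin n))
    (hf : f ∉ Set.range (algebraMap K (FreeAlgebra K (Fin n))))
    (hg : f * g = g * f) (hh : f * h = h * f) :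
    g * h = h * g :=
  (FreeAlgebra.commute_of_commute_of_notMem_range hf hg hh).eq
end
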